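/- arXiv:1303.2412 — 2 statements merged into one kernel-verified Lean document; each statement's English description precedes it below -/
import Mathlib

section
/- Let f : [0,1] → ℝ be continuous and differentiable with derivative f′ of finite total variation on [0,1]. Then 2·∫₀¹ |f′(x) − (f(1) − f(0))| dx ≤ Var(f′); that is, for the integration problem the minimal cone constant is τ_min = 2: the weak semi-norm ‖f′ − f(1) + f(0)‖₁ is at most half of the strong semi-norm Var(f′). -/
/-!
By the fundamental theorem of calculus, `f(1) - f(0)` is the mean of `f'` over `[0,1]`, so the
left-hand side is twice the mean absolute deviation of `f'` for the uniform distribution. By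
Cauchy–Schwarz that deviation is at most the standard deviation, which Popoviciu's inequality
bounds by half the length of any interval containing the values of `f'`; and `f'` takes its
values in an interval of length at most `Var(f')`.
-/

open MeasureTheory ProbabilityTheory Set

theorem BoundedVariationOn.exists_mapsTo_Icc {α : Type*} [LinearOrder α] {f : α → ℝ} {s : Set α}
    (h : BoundedVariationOn f s) :
    ∃ m M, MapsTo f s (Icc m M) ∧ M - m ≤ (eVariationOn f s).toReal := by
  have hdist : ∀ y ∈ f '' s, ∀ z ∈ f '' s, dist y z ≤ (eVariationOn f s).toReal := by
    rintro _ ⟨x, hx, rfl⟩ _ ⟨y, hy, rfl⟩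
    exact h.dist_le hx hy
  have hbdd : Bornology.IsBounded (f '' s) := Metric.isBounded_iff.2 ⟨_, hdist⟩
  refine ⟨sInf (f '' s), sSup (f '' s), fun x hx ↦ ⟨csInf_le hbdd.bddBelow (mem_image_of_mem f hx),
    le_csSup hbdd.bddAbove (mem_image_of_mem f hx)⟩, ?_⟩
  rw [← Real.diam_eq hbdd]
  exact Metric.diam_le_of_forall_dist_le ENNReal.toReal_nonneg hdist

section MeanAbsoluteDeviation

variable {Ω : Type*} {mΩ : MeasurableSpace Ω} {μ : Measure Ω} [IsProbabilityMeasure μ] {X : Ω → ℝ}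

theorem sq_integral_abs_sub_integral_le_variance (hX : MemLp X 2 μ) :
    (∫ ω, |X ω - μ[X]| ∂μ) ^ 2 ≤ Var[X; μ] := by
  set Y : Ω → ℝ := fun ω ↦ |X ω - μ[X]|
  have hY : MemLp Y 2 μ := (hX.sub (memLp_const _)).abs
  calc μ[Y] ^ 2 ≤ μ[Y ^ 2] := by
        have := variance_nonneg Y μ
        rw [variance_eq_sub hY] at this
        linarith
    _ = Var[X; μ] := by
        rw [variance_eq_integral hX.aemeasurable]
        simp only [Y, Pi.pow_apply, sq_abs]

theorem two_mul_integral_abs_sub_integral_le {a b : ℝ} (h : ∀ᵐ ω ∂μ, X ω ∈ Icc a b)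
    (hX : AEMeasurable X μ) : 2 * ∫ ω, |X ω - μ[X]| ∂μ ≤ b - a := by
  obtain ⟨ω, hω⟩ := h.exists
  have hMAD := (sq_integral_abs_sub_integral_le_variance
    (memLp_of_bounded h hX.aestronglyMeasurable 2)).trans (variance_le_sq_of_bounded h hX)
  have hhalf := (pow_le_pow_iff_left₀ (integral_nonneg fun _ ↦ abs_nonneg _)
    (by linarith [hω.1, hω.2]) two_ne_zero).1 hMAD
  linarith

end MeanAbsoluteDeviation

/-- For the integration problem the minimal cone constant is `τ_min = 2`:
`2 ‖f′ − f(1) + f(0)‖₁ ≤ Var(f′)`. -/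
theorem taumin_integration
    (f f' : ℝ → ℝ)
    (hf : ContinuousOn f (Icc 0 1))
    (hderiv : ∀ x ∈ Icc (0:ℝ) 1, HasDerivWithinAt f (f' x) (Icc 0 1) x)
    (hbv : BoundedVariationOn f' (Icc 0 1))
    (hint : IntervalIntegrable f' volume 0 1) :
    2 * ∫ x in (0:ℝ)..1, |f' x - (f 1 - f 0)|
      ≤ (eVariationOn f' (Icc 0 1)).toReal := by
  set μ := volume.restrict (Ioc (0:ℝ) 1)
  have : IsProbabilityMeasure μ := ⟨by simp [μ]⟩
  obtain ⟨m, M, hmaps, hMm⟩ := hbv.exists_mapsTo_Icc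
  have hbound : ∀ᵐ x ∂μ, f' x ∈ Icc m M :=
    ae_restrict_of_forall_mem measurableSet_Ioc fun x hx ↦ hmaps (Ioc_subset_Icc_self hx)
  have hmean : μ[f'] = f 1 - f 0 := by
    rw [← intervalIntegral.integral_of_le zero_le_one]
    exact intervalIntegral.integral_eq_sub_of_hasDerivAt_of_le zero_le_one hf
      (fun x hx ↦ (hderiv x (Ioo_subset_Icc_self hx)).hasDerivAt (Icc_mem_nhds hx.1 hx.2)) hint
  calc 2 * ∫ x in (0:ℝ)..1, |f' x - (f 1 - f 0)| = 2 * ∫ x, |f' x - μ[f']| ∂μ := by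
        rw [intervalIntegral.integral_of_le zero_le_one, hmean]
    _ ≤ M - m := two_mul_integral_abs_sub_integral_le hbound hint.1.aemeasurable
    _ ≤ _ := hMm
end

section
/- Let τ > 2, s > 0, let n be a nonnegative integer, and let ξ_1, …, ξ_n be any points in [0,1]. Then there exist two functions f₊, f₋ : [0,1] → ℝ, each of the form f_±(x) = ∫₀ˣ g_±(t) dt for some g_± : [0,1] → ℝ of bounded variation, such that: (i) Var(g_±) ≤ s; (ii) both f₊ and f₋ lie in the cone C_τ, i.e., Var(g_±) ≤ τ·∫₀¹ |g_±(t) − (f_±(1) − f_±(0))| dt; (iii) f₊(ξ_i) = f₋(ξ_i) for all i = 1,…,n; and (iv) ∫₀¹ f₊(x) dx − ∫₀¹ f₋(x) dx ≥ s(τ−2)/(16τ(n+1)²). Consequently, any deterministic algorithm for univariate integration that uses only the n function values f(ξ_1),…,f(ξ_n) must make an error of at least s(τ−2)/(32τ(n+1)²) on at least one function in C_τ with Var(f′) ≤ s. -/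
/-!
Among `n` nodes, some interval `(k/(n+1), (k+1)/(n+1))` contains none of them.
Perturb the hat `f₀ x = 1/2 - |1/2 - x|` by `± c₁` times a triangle bump `f₁` supported on
that interval: the two primitives agree at every node, yet their integrals differ by
`c₁ (n+1)⁻² / 2`. Their slopes take only the values `± c₀ ± c₁` and `± c₀`, so `|f±′| ≥ c₀ - c₁`
pointwise, while `Var f±′ ≤ 2 c₀ + 4 c₁`; for the right `c₀, c₁` both functions lie in the cone
`C_τ` with `Var f±′ ≤ s`. An algorithm sees the same data for both and so errs by half the gap
on one of them.
-/

open MeasureTheory Set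

noncomputable def heaviside (c t : ℝ) : ℝ := if c ≤ t then 1 else 0

noncomputable def ramp (c x : ℝ) : ℝ := max (x - c) 0

lemma monotone_heaviside (c : ℝ) : Monotone (heaviside c) := by
  intro x y hxy
  unfold heaviside
  split_ifs with hx hy <;> first | exact absurd (hx.trans hxy) hy | norm_num

lemma ramp_of_le {c x : ℝ} (h : c ≤ x) : ramp c x = x - c := max_eq_left (sub_nonneg.2 h)

lemma ramp_of_ge {c x : ℝ} (h : x ≤ c) : ramp c x = 0 := max_eq_right (sub_nonpos.2 h)

@[fun_prop]
lemma continuous_ramp (c : ℝ) : Continuous (ramp c) := by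
  unfold ramp; fun_prop

lemma hasDerivWithinAt_ramp (c x : ℝ) : HasDerivWithinAt (ramp c) (heaviside c x) (Ioi x) x := by
  unfold heaviside
  split_ifs with hcx
  · exact ((hasDerivAt_id x).sub_const c).hasDerivWithinAt.congr
      (fun y hy => ramp_of_le (hcx.trans (le_of_lt hy))) (ramp_of_le hcx)
  · refine ((hasDerivAt_const x (0 : ℝ)).congr_of_eventuallyEq ?_).hasDerivWithinAt
    filter_upwards [Iio_mem_nhds (not_le.1 hcx)] with y hy
    exact ramp_of_ge (le_of_lt hy)

lemma hasDerivWithinAt_ramp_sq (c x : ℝ) :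
    HasDerivWithinAt (fun y => ramp c y ^ 2 / 2) (ramp c x) (Ioi x) x := by
  refine (((hasDerivWithinAt_ramp c x).pow 2).div_const 2).congr_deriv ?_
  simp only [heaviside]
  split_ifs with hcx
  · ring
  · simp [ramp_of_ge (le_of_lt (not_le.1 hcx))]

lemma intervalIntegrable_heaviside (c p q : ℝ) : IntervalIntegrable (heaviside c) volume p q :=
  (monotone_heaviside c).intervalIntegrable

lemma integral_heaviside (c p q : ℝ) : ∫ t in p..q, heaviside c t = ramp c q - ramp c p :=
  intervalIntegral.integral_eq_sub_of_hasDeriv_right (continuous_ramp c).continuousOn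
    (fun x _ => hasDerivWithinAt_ramp c x) (intervalIntegrable_heaviside c p q)

lemma integral_ramp (c p q : ℝ) : ∫ x in p..q, ramp c x = ramp c q ^ 2 / 2 - ramp c p ^ 2 / 2 :=
  intervalIntegral.integral_eq_sub_of_hasDeriv_right
    (((continuous_ramp c).pow 2).div_const 2).continuousOn (fun x _ => hasDerivWithinAt_ramp_sq c x)
    ((continuous_ramp c).intervalIntegrable p q)

section Variation

variable {α : Type*} [LinearOrder α]

lemma eVariationOn_const {E : Type*} [PseudoEMetricSpace E] (w : E) (s : Set α) :
    eVariationOn (fun _ : α => w) s = 0 :=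
  eVariationOn.constant_on (subsingleton_singleton.anti (image_subset_iff.2 fun _ _ => rfl))

lemma eVariationOn_le_add_of_edist_le {E : Type*} [PseudoEMetricSpace E] {f g h : α → E}
    (s : Set α) (hfg : ∀ x y, edist (h x) (h y) ≤ edist (f x) (f y) + edist (g x) (g y)) :
    eVariationOn h s ≤ eVariationOn f s + eVariationOn g s := by
  refine iSup_le fun ⟨n, u, hu, us⟩ => ?_
  calc ∑ i ∈ Finset.range n, edist (h (u (i + 1))) (h (u i))
      ≤ ∑ i ∈ Finset.range n,
          (edist (f (u (i + 1))) (f (u i)) + edist (g (u (i + 1))) (g (u i))) :=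
        Finset.sum_le_sum fun i _ => hfg _ _
    _ ≤ eVariationOn f s + eVariationOn g s := by
        rw [Finset.sum_add_distrib]
        exact add_le_add (eVariationOn.sum_le (f := f) hu us) (eVariationOn.sum_le (f := g) hu us)

lemma eVariationOn_add_le {E : Type*} [SeminormedAddCommGroup E] (f g : α → E) (s : Set α) :
    eVariationOn (fun x => f x + g x) s ≤ eVariationOn f s + eVariationOn g s :=
  eVariationOn_le_add_of_edist_le s fun _ _ => edist_add_add_le _ _ _ _

lemma eVariationOn_sub_le {E : Type*} [SeminormedAddCommGroup E] (f g : α → E) (s : Set α) :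
    eVariationOn (fun x => f x - g x) s ≤ eVariationOn f s + eVariationOn g s :=
  eVariationOn_le_add_of_edist_le s fun x y => by
    simpa only [sub_eq_add_neg, edist_neg_neg] using edist_add_add_le (f x) (-g x) (f y) (-g y)

lemma eVariationOn_const_mul_le (w : ℝ) (f : α → ℝ) (s : Set α) :
    eVariationOn (fun x => w * f x) s ≤ ‖w‖ₑ * eVariationOn f s := by
  simpa [eVariationOn_const] using eVariationOn_fun_mul_le (f := fun _ => w) (g := f) (s := s)
    (C := ‖w‖ₑ) (D := ⊤) (fun _ _ => le_rfl) (fun _ _ => le_top)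

end Variation

lemma eVariationOn_heaviside_le (c : ℝ) (s : Set ℝ) : eVariationOn (heaviside c) s ≤ 1 := by
  rw [eVariationOn.eq_biSup_inter_Icc]
  refine iSup₂_le fun ⟨p, q⟩ ⟨hp, hq, _⟩ => ?_
  rw [((monotone_heaviside c).monotoneOn s).eVariationOn_eq hp hq, ← ENNReal.ofReal_one]
  refine ENNReal.ofReal_le_ofReal ?_
  unfold heaviside
  split_ifs <;> norm_num

-- `hatSlope` and `bumpSlope a b` are the right derivatives of the hat `1/2 - |1/2 - x|` on
-- `[0, 1]` and of the triangle bump `bump a b` on `[a, b]`.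
noncomputable def hatSlope (t : ℝ) : ℝ := 1 - 2 * heaviside (1 / 2) t

noncomputable def bumpSlope (a b t : ℝ) : ℝ :=
  heaviside a t - 2 * heaviside ((a + b) / 2) t + heaviside b t

noncomputable def bump (a b x : ℝ) : ℝ := ramp a x - 2 * ramp ((a + b) / 2) x + ramp b x

lemma abs_hatSlope (t : ℝ) : |hatSlope t| = 1 := by
  unfold hatSlope heaviside
  split_ifs <;> norm_num

lemma abs_bumpSlope_le {a b : ℝ} (hab : a ≤ b) (t : ℝ) : |bumpSlope a b t| ≤ 1 := by
  unfold bumpSlope heaviside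
  rw [abs_le]
  split_ifs <;> constructor <;> linarith

lemma bump_eq_zero {a b x : ℝ} (hab : a ≤ b) (hx : x ∉ Ioo a b) : bump a b x = 0 := by
  unfold bump
  rcases le_or_gt x a with hxa | hax
  · rw [ramp_of_ge hxa, ramp_of_ge (by linarith), ramp_of_ge (by linarith)]
    ring
  · have hbx : b ≤ x := not_lt.1 fun hxb => hx ⟨hax, hxb⟩
    rw [ramp_of_le (by linarith), ramp_of_le (by linarith), ramp_of_le hbx]
    ring

lemma intervalIntegrable_hatSlope (p q : ℝ) : IntervalIntegrable hatSlope volume p q :=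
  intervalIntegrable_const.sub ((intervalIntegrable_heaviside _ p q).const_mul 2)

lemma intervalIntegrable_bumpSlope (a b p q : ℝ) :
    IntervalIntegrable (bumpSlope a b) volume p q :=
  ((intervalIntegrable_heaviside a p q).sub
    ((intervalIntegrable_heaviside _ p q).const_mul 2)).add (intervalIntegrable_heaviside b p q)

lemma integral_hatSlope_zero_one : ∫ t in (0 : ℝ)..1, hatSlope t = 0 := by
  simp only [hatSlope]
  rw [intervalIntegral.integral_sub intervalIntegrable_const
    ((intervalIntegrable_heaviside _ _ _).const_mul 2), intervalIntegral.integral_const_mul,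
    integral_heaviside, ramp_of_le (by norm_num), ramp_of_ge (by norm_num)]
  norm_num

lemma integral_bumpSlope {a b : ℝ} (ha : 0 ≤ a) (hab : a ≤ b) (x : ℝ) :
    ∫ t in (0 : ℝ)..x, bumpSlope a b t = bump a b x := by
  have hbump0 : bump a b 0 = 0 := bump_eq_zero hab fun h => (not_lt.2 ha) h.1
  simp only [bumpSlope]
  rw [intervalIntegral.integral_add ((intervalIntegrable_heaviside a 0 x).sub
      ((intervalIntegrable_heaviside _ 0 x).const_mul 2)) (intervalIntegrable_heaviside b 0 x),
    intervalIntegral.integral_sub (intervalIntegrable_heaviside a 0 x)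
      ((intervalIntegrable_heaviside _ 0 x).const_mul 2),
    intervalIntegral.integral_const_mul, integral_heaviside, integral_heaviside, integral_heaviside]
  unfold bump at hbump0 ⊢
  linarith

lemma integral_bump {a b : ℝ} (ha : 0 ≤ a) (hab : a ≤ b) (hb : b ≤ 1) :
    ∫ x in (0 : ℝ)..1, bump a b x = (b - a) ^ 2 / 4 := by
  have hI (c : ℝ) : IntervalIntegrable (ramp c) volume 0 1 :=
    (continuous_ramp c).intervalIntegrable 0 1
  simp only [bump]
  rw [intervalIntegral.integral_add ((hI a).sub ((hI _).const_mul 2)) (hI b),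
    intervalIntegral.integral_sub (hI a) ((hI _).const_mul 2),
    intervalIntegral.integral_const_mul, integral_ramp, integral_ramp, integral_ramp,
    ramp_of_le (x := 1) (by linarith), ramp_of_le (x := 1) (by linarith), ramp_of_le hb,
    ramp_of_ge ha, ramp_of_ge (x := 0) (by linarith), ramp_of_ge (x := 0) (by linarith)]
  ring

lemma eVariationOn_two_mul_heaviside_le (c : ℝ) (s : Set ℝ) :
    eVariationOn (fun t => 2 * heaviside c t) s ≤ 2 :=
  calc eVariationOn (fun t => 2 * heaviside c t) s
      ≤ ‖(2 : ℝ)‖ₑ * eVariationOn (heaviside c) s := eVariationOn_const_mul_le _ _ s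
    _ ≤ ‖(2 : ℝ)‖ₑ * 1 := by gcongr; exact eVariationOn_heaviside_le c s
    _ = 2 := by simp [Real.enorm_eq_ofReal_abs]

lemma eVariationOn_hatSlope_le (s : Set ℝ) : eVariationOn hatSlope s ≤ 2 := by
  unfold hatSlope
  calc eVariationOn (fun t => 1 - 2 * heaviside (1 / 2) t) s
      ≤ eVariationOn (fun _ : ℝ => (1 : ℝ)) s + eVariationOn (fun t => 2 * heaviside (1 / 2) t) s :=
        eVariationOn_sub_le _ _ s
    _ ≤ 2 := by rw [eVariationOn_const, zero_add]; exact eVariationOn_two_mul_heaviside_le _ s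

lemma eVariationOn_bumpSlope_le (a b : ℝ) (s : Set ℝ) : eVariationOn (bumpSlope a b) s ≤ 4 := by
  unfold bumpSlope
  calc eVariationOn (fun t => heaviside a t - 2 * heaviside ((a + b) / 2) t + heaviside b t) s
      ≤ eVariationOn (heaviside a) s + eVariationOn (fun t => 2 * heaviside ((a + b) / 2) t) s
        + eVariationOn (heaviside b) s :=
        (eVariationOn_add_le (fun t => heaviside a t - 2 * heaviside ((a + b) / 2) t) _ s).trans
          (by gcongr; exact eVariationOn_sub_le (heaviside a) _ s)
    _ ≤ 1 + 2 + 1 := add_le_add (add_le_add (eVariationOn_heaviside_le a s)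
        (eVariationOn_two_mul_heaviside_le _ s)) (eVariationOn_heaviside_le b s)
    _ = 4 := by norm_num

noncomputable def foolingSlope (c₀ c a b t : ℝ) : ℝ := c₀ * hatSlope t + c * bumpSlope a b t

def InCone (τ : ℝ) (g : ℝ → ℝ) : Prop :=
  (eVariationOn g (Icc 0 1)).toReal ≤ τ * ∫ t in (0 : ℝ)..1, |g t - ∫ u in (0 : ℝ)..1, g u|

lemma inCone_of_le_abs_sub_integral {τ m : ℝ} {g : ℝ → ℝ} (hτ : 0 ≤ τ)
    (hg : IntervalIntegrable g volume 0 1)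
    (hlow : ∀ t ∈ Icc (0 : ℝ) 1, m ≤ |g t - ∫ u in (0 : ℝ)..1, g u|)
    (hvar : (eVariationOn g (Icc 0 1)).toReal ≤ τ * m) : InCone τ g := by
  refine hvar.trans (mul_le_mul_of_nonneg_left ?_ hτ)
  simpa using intervalIntegral.integral_mono_on zero_le_one intervalIntegrable_const
    (hg.sub intervalIntegrable_const).abs hlow

section FoolingSlope

variable (c₀ c : ℝ) {a b : ℝ}

lemma eVariationOn_foolingSlope_le (s : Set ℝ) :
    eVariationOn (foolingSlope c₀ c a b) s ≤ ENNReal.ofReal (2 * |c₀| + 4 * |c|) := by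
  unfold foolingSlope
  calc eVariationOn (fun t => c₀ * hatSlope t + c * bumpSlope a b t) s
      ≤ ‖c₀‖ₑ * eVariationOn hatSlope s + ‖c‖ₑ * eVariationOn (bumpSlope a b) s :=
        (eVariationOn_add_le _ _ s).trans
          (add_le_add (eVariationOn_const_mul_le _ _ s) (eVariationOn_const_mul_le _ _ s))
    _ ≤ ‖c₀‖ₑ * 2 + ‖c‖ₑ * 4 := by
        gcongr
        · exact eVariationOn_hatSlope_le s
        · exact eVariationOn_bumpSlope_le a b s
    _ = ENNReal.ofReal (2 * |c₀| + 4 * |c|) := by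
        rw [ENNReal.ofReal_add (by positivity) (by positivity), ENNReal.ofReal_mul zero_le_two,
          ENNReal.ofReal_mul zero_le_four, Real.enorm_eq_ofReal_abs, Real.enorm_eq_ofReal_abs]
        simp [mul_comm]

lemma le_abs_foolingSlope (hab : a ≤ b) (t : ℝ) : |c₀| - |c| ≤ |foolingSlope c₀ c a b t| :=
  calc |c₀| - |c| ≤ |c₀ * hatSlope t| - |c * bumpSlope a b t| := by
        rw [abs_mul, abs_mul, abs_hatSlope, mul_one]
        have := abs_bumpSlope_le hab t
        nlinarith [abs_nonneg c]
    _ ≤ |foolingSlope c₀ c a b t| := abs_sub_abs_le_abs_add _ _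

lemma intervalIntegrable_foolingSlope (p q : ℝ) :
    IntervalIntegrable (foolingSlope c₀ c a b) volume p q :=
  ((intervalIntegrable_hatSlope p q).const_mul c₀).add
    ((intervalIntegrable_bumpSlope a b p q).const_mul c)

lemma integral_foolingSlope (ha : 0 ≤ a) (hab : a ≤ b) (x : ℝ) :
    ∫ t in (0 : ℝ)..x, foolingSlope c₀ c a b t
      = c₀ * (∫ t in (0 : ℝ)..x, hatSlope t) + c * bump a b x := by
  simp only [foolingSlope]
  rw [intervalIntegral.integral_add ((intervalIntegrable_hatSlope 0 x).const_mul c₀)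
      ((intervalIntegrable_bumpSlope a b 0 x).const_mul c),
    intervalIntegral.integral_const_mul, intervalIntegral.integral_const_mul,
    integral_bumpSlope ha hab]

lemma integral_foolingSlope_zero_one (ha : 0 ≤ a) (hab : a ≤ b) (hb : b ≤ 1) :
    ∫ t in (0 : ℝ)..1, foolingSlope c₀ c a b t = 0 := by
  rw [integral_foolingSlope c₀ c ha hab, integral_hatSlope_zero_one,
    bump_eq_zero hab fun h => (not_lt.2 hb) h.2]
  ring

lemma integral_integral_foolingSlope (ha : 0 ≤ a) (hab : a ≤ b) (hb : b ≤ 1) :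
    ∫ x in (0 : ℝ)..1, ∫ t in (0 : ℝ)..x, foolingSlope c₀ c a b t
      = c₀ * (∫ x in (0 : ℝ)..1, ∫ t in (0 : ℝ)..x, hatSlope t) + c * ((b - a) ^ 2 / 4) := by
  have hG : Continuous fun x => ∫ t in (0 : ℝ)..x, hatSlope t :=
    intervalIntegral.continuous_primitive intervalIntegrable_hatSlope 0
  have hB : Continuous (bump a b) := by unfold bump; fun_prop
  simp only [integral_foolingSlope c₀ c ha hab]
  rw [intervalIntegral.integral_add ((hG.intervalIntegrable 0 1).const_mul c₀)
      ((hB.intervalIntegrable 0 1).const_mul c),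
    intervalIntegral.integral_const_mul, intervalIntegral.integral_const_mul,
    integral_bump ha hab hb]

lemma inCone_foolingSlope {τ : ℝ} (hτ : 0 ≤ τ) (ha : 0 ≤ a) (hab : a ≤ b) (hb : b ≤ 1)
    (hbudget : 2 * |c₀| + 4 * |c| ≤ τ * (|c₀| - |c|)) : InCone τ (foolingSlope c₀ c a b) :=
  inCone_of_le_abs_sub_integral hτ (intervalIntegrable_foolingSlope c₀ c 0 1)
    (fun t _ => by
      rw [integral_foolingSlope_zero_one c₀ c ha hab hb, sub_zero]
      exact le_abs_foolingSlope c₀ c hab t)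
    ((ENNReal.toReal_le_of_le_ofReal (by positivity)
      (eVariationOn_foolingSlope_le c₀ c _)).trans hbudget)

end FoolingSlope

lemma exists_foolingPair {τ s a b : ℝ} (hτ : 2 < τ) (hs : 0 ≤ s) (ha : 0 ≤ a) (hab : a ≤ b)
    (hb : b ≤ 1) :
    ∃ gp gm : ℝ → ℝ,
      eVariationOn gp (Icc 0 1) ≤ ENNReal.ofReal s ∧
      eVariationOn gm (Icc 0 1) ≤ ENNReal.ofReal s ∧
      InCone τ gp ∧ InCone τ gm ∧
      (∀ w ∉ Ioo a b, ∫ t in (0 : ℝ)..w, gp t = ∫ t in (0 : ℝ)..w, gm t) ∧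
      (∫ x in (0 : ℝ)..1, ∫ t in (0 : ℝ)..x, gp t) - (∫ x in (0 : ℝ)..1, ∫ t in (0 : ℝ)..x, gm t)
        = s * (τ - 2) / (16 * τ) * (b - a) ^ 2 := by
  have hτ0 : 0 < τ := by linarith
  -- Chosen so that the variation bound `2 c₀ + 4 c₁` equals the cone bound `τ (c₀ - c₁)`.
  set c₀ := s * (τ + 4) / (8 * τ)
  set c₁ := s * (τ - 2) / (8 * τ)
  have hc₀ : |c₀| = c₀ := abs_of_nonneg (by positivity)
  have hc₁ : |c₁| = c₁ := abs_of_nonneg (div_nonneg (mul_nonneg hs (by linarith)) (by positivity))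
  have hvariation : 2 * c₀ + 4 * c₁ = 3 * s / 4 := by simp only [c₀, c₁]; field_simp; ring
  have hcone : τ * (c₀ - c₁) = 3 * s / 4 := by simp only [c₀, c₁]; field_simp; ring
  have hfooling (c : ℝ) (hc : |c| = c₁) :
      eVariationOn (foolingSlope c₀ c a b) (Icc 0 1) ≤ ENNReal.ofReal s ∧
        InCone τ (foolingSlope c₀ c a b) :=
    ⟨(eVariationOn_foolingSlope_le c₀ c _).trans (ENNReal.ofReal_le_ofReal (by
      rw [hc, hc₀]; linarith)), inCone_foolingSlope c₀ c hτ0.le ha hab hb (by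
      rw [hc, hc₀]; linarith)⟩
  obtain ⟨hvp, hcp⟩ := hfooling c₁ hc₁
  obtain ⟨hvm, hcm⟩ := hfooling (-c₁) (by rw [abs_neg, hc₁])
  refine ⟨_, _, hvp, hvm, hcp, hcm, fun w hw => ?_, ?_⟩
  · rw [integral_foolingSlope _ _ ha hab, integral_foolingSlope _ _ ha hab, bump_eq_zero hab hw]
    ring
  · rw [integral_integral_foolingSlope _ _ ha hab hb, integral_integral_foolingSlope _ _ ha hab hb]
    simp only [c₁]
    field_simp
    ring

lemma exists_forall_notMem_Ioo_div {n N : ℕ} (hnN : n < N) (ξ : Fin n → ℝ) :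
    ∃ k < N, ∀ i, ξ i ∉ Ioo ((k : ℝ) / N) ((k + 1) / N) := by
  classical
  have hN : (0 : ℝ) < N := by exact_mod_cast (Nat.zero_le n).trans_lt hnN
  obtain ⟨k, hkN, hk⟩ := Finset.exists_mem_notMem_of_card_lt_card
    (s := Finset.univ.image fun i => ⌊ξ i * N⌋₊) (t := Finset.range N)
    (by simpa using Finset.card_image_le.trans_lt (by simpa using hnN))
  refine ⟨k, Finset.mem_range.1 hkN, fun i hi => hk (Finset.mem_image.2 ⟨i, Finset.mem_univ _, ?_⟩)⟩
  rw [mem_Ioo, div_lt_iff₀ hN, lt_div_iff₀ hN] at hi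
  exact (Nat.floor_eq_iff ((Nat.cast_nonneg k).trans hi.1.le)).2 ⟨hi.1.le, hi.2⟩

lemma le_abs_sub_or_le_abs_sub {x y ε : ℝ} (h : 2 * ε ≤ x - y) (v : ℝ) :
    ε ≤ |x - v| ∨ ε ≤ |y - v| := by
  rcases le_total v ((x + y) / 2) with hv | hv
  · exact Or.inl (le_abs.2 (Or.inl (by linarith)))
  · exact Or.inr (le_abs.2 (Or.inr (by linarith)))

theorem lower_bound_cone_integration_general
    (τ s : ℝ) (hτ : 2 < τ) (hs : 0 < s)
    (n : ℕ) (ξ : Fin n → ℝ) :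
    (∃ gp gm : ℝ → ℝ,
      eVariationOn gp (Icc 0 1) ≤ ENNReal.ofReal s ∧
      eVariationOn gm (Icc 0 1) ≤ ENNReal.ofReal s ∧
      (eVariationOn gp (Icc 0 1)).toReal
        ≤ τ * ∫ t in (0:ℝ)..1, |gp t - ∫ u in (0:ℝ)..1, gp u| ∧
      (eVariationOn gm (Icc 0 1)).toReal
        ≤ τ * ∫ t in (0:ℝ)..1, |gm t - ∫ u in (0:ℝ)..1, gm u| ∧
      (∀ i, (∫ t in (0:ℝ)..(ξ i), gp t) = ∫ t in (0:ℝ)..(ξ i), gm t) ∧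
      s * (τ - 2) / (16 * τ * ((n : ℝ) + 1) ^ 2)
        ≤ (∫ x in (0:ℝ)..1, ∫ t in (0:ℝ)..x, gp t)
            - ∫ x in (0:ℝ)..1, ∫ t in (0:ℝ)..x, gm t) ∧
    (∀ A : (Fin n → ℝ) → ℝ, ∃ g : ℝ → ℝ,
      eVariationOn g (Icc 0 1) ≤ ENNReal.ofReal s ∧
      (eVariationOn g (Icc 0 1)).toReal
        ≤ τ * ∫ t in (0:ℝ)..1, |g t - ∫ u in (0:ℝ)..1, g u| ∧
      s * (τ - 2) / (32 * τ * ((n : ℝ) + 1) ^ 2)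
        ≤ |(∫ x in (0:ℝ)..1, ∫ t in (0:ℝ)..x, g t)
            - A (fun i => ∫ t in (0:ℝ)..(ξ i), g t)|) := by
  obtain ⟨k, hk, hξ⟩ := exists_forall_notMem_Ioo_div (Nat.lt_succ_self n) ξ
  push_cast at hξ
  have hN : (0 : ℝ) < n + 1 := by positivity
  obtain ⟨gp, gm, hvp, hvm, hcp, hcm, hagree, hdiff⟩ :=
    exists_foolingPair (a := k / (n + 1)) (b := (k + 1) / (n + 1)) hτ hs.le (by positivity)
      (by gcongr; linarith) ((div_le_one hN).2 (by exact_mod_cast Nat.succ_le_of_lt hk))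
  have hdata : ∀ i, ∫ t in (0 : ℝ)..ξ i, gp t = ∫ t in (0 : ℝ)..ξ i, gm t :=
    fun i => hagree _ (hξ i)
  have hgap : s * (τ - 2) / (16 * τ * ((n : ℝ) + 1) ^ 2)
      = (∫ x in (0 : ℝ)..1, ∫ t in (0 : ℝ)..x, gp t)
        - ∫ x in (0 : ℝ)..1, ∫ t in (0 : ℝ)..x, gm t := by
    rw [hdiff]
    field_simp
    ring
  refine ⟨⟨gp, gm, hvp, hvm, hcp, hcm, hdata, hgap.le⟩, fun A => ?_⟩
  rcases le_abs_sub_or_le_abs_sub (ε := s * (τ - 2) / (32 * τ * ((n : ℝ) + 1) ^ 2))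
      (by rw [← hgap]; exact le_of_eq (by field_simp; ring))
      (A fun i => ∫ t in (0 : ℝ)..ξ i, gp t) with h | h
  · exact ⟨gp, hvp, hcp, h⟩
  · exact ⟨gm, hvm, hcm, by simpa only [hdata] using h⟩

/-- Fooling-pair construction for the lower complexity bound for integration on the cone
`C_τ`, together with its consequence: any deterministic algorithm using only the data
`f(ξ_1),…,f(ξ_n)` errs by at least `s(τ−2)/(32τ(n+1)²)` on some `f ∈ C_τ` with
`Var(f′) ≤ s`.  Here `f(x) = ∫₀ˣ g` (so `f(0) = 0`, `f′ = g`,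
`f(1) − f(0) = ∫₀¹ g`). -/
theorem lower_bound_cone_integration
    (τ s : ℝ) (hτ : 2 < τ) (hs : 0 < s)
    (n : ℕ) (ξ : Fin n → ℝ) (hξ : ∀ i, ξ i ∈ Icc (0:ℝ) 1) :
    (∃ gp gm : ℝ → ℝ,
      eVariationOn gp (Icc 0 1) ≤ ENNReal.ofReal s ∧
      eVariationOn gm (Icc 0 1) ≤ ENNReal.ofReal s ∧
      (eVariationOn gp (Icc 0 1)).toReal
        ≤ τ * ∫ t in (0:ℝ)..1, |gp t - ∫ u in (0:ℝ)..1, gp u| ∧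
      (eVariationOn gm (Icc 0 1)).toReal
        ≤ τ * ∫ t in (0:ℝ)..1, |gm t - ∫ u in (0:ℝ)..1, gm u| ∧
      (∀ i, (∫ t in (0:ℝ)..(ξ i), gp t) = ∫ t in (0:ℝ)..(ξ i), gm t) ∧
      s * (τ - 2) / (16 * τ * ((n : ℝ) + 1) ^ 2)
        ≤ (∫ x in (0:ℝ)..1, ∫ t in (0:ℝ)..x, gp t)
            - ∫ x in (0:ℝ)..1, ∫ t in (0:ℝ)..x, gm t) ∧
    (∀ A : (Fin n → ℝ) → ℝ, ∃ g : ℝ → ℝ,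
      eVariationOn g (Icc 0 1) ≤ ENNReal.ofReal s ∧
      (eVariationOn g (Icc 0 1)).toReal
        ≤ τ * ∫ t in (0:ℝ)..1, |g t - ∫ u in (0:ℝ)..1, g u| ∧
      s * (τ - 2) / (32 * τ * ((n : ℝ) + 1) ^ 2)
        ≤ |(∫ x in (0:ℝ)..1, ∫ t in (0:ℝ)..x, g t)
            - A (fun i => ∫ t in (0:ℝ)..(ξ i), g t)|) :=
  lower_bound_cone_integration_general τ s hτ hs n ξ
end
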